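/- arXiv:1306.5198 — 2 statements merged into one kernel-verified Lean document; each statement's English description precedes it below -/
import Mathlib

section
/- Galois-type duality for conditional inverses: let F : M → M be local, increasing, and respect a.e. equality, let F⁻ and F⁺ be its left- and right-continuous versions, and let G_l, G_r be a conditional left-inverse and a conditional right-inverse of F. Then for all m, s ∈ M: (1) F⁻(m) ≤ s a.e. if and only if m ≤ G_r(s) a.e.; (2) F⁺(m) ≥ s a.e. if and only if m ≥ G_l(s) a.e. -/
open MeasureTheory

variable {Ω : Type*} [MeasurableSpace Ω]

/-- `M`: the measurable functions `Ω → [-∞, ∞]`. -/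
def MSp (Ω : Type*) [MeasurableSpace Ω] : Type _ := {f : Ω → EReal // Measurable f}

/-- The constant function `+∞` as an element of `M`. -/
noncomputable def MSp.mtop (Ω : Type*) [MeasurableSpace Ω] : MSp Ω := ⟨fun _ => ⊤, measurable_const⟩

/-- The constant function `-∞` as an element of `M`. -/
noncomputable def MSp.mbot (Ω : Type*) [MeasurableSpace Ω] : MSp Ω := ⟨fun _ => ⊥, measurable_const⟩

open Classical in
/-- The pointwise piecewise combination `1_A f + 1_{Aᶜ} g`. -/
noncomputable def pcf (A : Set Ω) (f g : Ω → EReal) : Ω → EReal :=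
  fun ω => if ω ∈ A then f ω else g ω

/-- The piecewise combination `1_A m + 1_{Aᶜ} n` as an element of `M`. -/
noncomputable def MSp.pc (A : Set Ω) (hA : MeasurableSet A) (m n : MSp Ω) : MSp Ω :=
  ⟨pcf A m.1 n.1, by classical unfold pcf; exact Measurable.ite hA m.2 n.2⟩

/-- `F : M → M` respects `P`-a.e. equality. -/
def RespectsAE (P : Measure Ω) (F : MSp Ω → MSp Ω) : Prop :=
  ∀ m n : MSp Ω, m.1 =ᵐ[P] n.1 → (F m).1 =ᵐ[P] (F n).1

/-- `F : M → M` is increasing with respect to the `P`-a.e. order. -/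
def IncreasingAE (P : Measure Ω) (F : MSp Ω → MSp Ω) : Prop :=
  ∀ m n : MSp Ω, m.1 ≤ᵐ[P] n.1 → (F m).1 ≤ᵐ[P] (F n).1

/-- `F : M → M` is local: `F(1_A m + 1_{Aᶜ} n) = 1_A F(m) + 1_{Aᶜ} F(n)` a.e. -/
def LocalAE (P : Measure Ω) (F : MSp Ω → MSp Ω) : Prop :=
  ∀ (A : Set Ω) (hA : MeasurableSet A) (m n : MSp Ω),
    (F (MSp.pc A hA m n)).1 =ᵐ[P] pcf A (F m).1 (F n).1

/-- `g` is an essential infimum of the set `S ⊆ M`. -/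
def IsEssInfM (P : Measure Ω) (S : Set (MSp Ω)) (g : MSp Ω) : Prop :=
  (∀ f ∈ S, g.1 ≤ᵐ[P] f.1) ∧ ∀ h : MSp Ω, (∀ f ∈ S, h.1 ≤ᵐ[P] f.1) → h.1 ≤ᵐ[P] g.1

/-- `g` is an essential supremum of the set `S ⊆ M`. -/
def IsEssSupM (P : Measure Ω) (S : Set (MSp Ω)) (g : MSp Ω) : Prop :=
  (∀ f ∈ S, f.1 ≤ᵐ[P] g.1) ∧ ∀ h : MSp Ω, (∀ f ∈ S, f.1 ≤ᵐ[P] h.1) → g.1 ≤ᵐ[P] h.1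

/-- `Gl` is a conditional left-inverse of `F`: writing `A_s = {F(+∞) ≥ s}`, one has
`Gl(s) = +∞` a.e. on `A_sᶜ` and, on `A_s`, `Gl(s)` agrees a.e. with an essential infimum
of `{ m ∈ M : F(m) ≥ s a.e. on A_s }`. -/
def IsCondLeftInv (P : Measure Ω) (F Gl : MSp Ω → MSp Ω) : Prop :=
  ∀ s : MSp Ω,
    (∀ᵐ ω ∂P, ω ∉ {ω' | s.1 ω' ≤ (F (MSp.mtop Ω)).1 ω'} → (Gl s).1 ω = ⊤) ∧
    ∃ g : MSp Ω,
      IsEssInfM P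
        {m : MSp Ω | ∀ᵐ ω ∂P, ω ∈ {ω' | s.1 ω' ≤ (F (MSp.mtop Ω)).1 ω'} →
          s.1 ω ≤ (F m).1 ω} g ∧
      ∀ᵐ ω ∂P, ω ∈ {ω' | s.1 ω' ≤ (F (MSp.mtop Ω)).1 ω'} → (Gl s).1 ω = g.1 ω

/-- `Gr` is a conditional right-inverse of `F`: writing `B_s = {F(-∞) ≤ s}`, one has
`Gr(s) = -∞` a.e. on `B_sᶜ` and, on `B_s`, `Gr(s)` agrees a.e. with an essential supremum
of `{ m ∈ M : F(m) ≤ s a.e. on B_s }`. -/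
def IsCondRightInv (P : Measure Ω) (F Gr : MSp Ω → MSp Ω) : Prop :=
  ∀ s : MSp Ω,
    (∀ᵐ ω ∂P, ω ∉ {ω' | (F (MSp.mbot Ω)).1 ω' ≤ s.1 ω'} → (Gr s).1 ω = ⊥) ∧
    ∃ g : MSp Ω,
      IsEssSupM P
        {m : MSp Ω | ∀ᵐ ω ∂P, ω ∈ {ω' | (F (MSp.mbot Ω)).1 ω' ≤ s.1 ω'} →
          (F m).1 ω ≤ s.1 ω} g ∧
      ∀ᵐ ω ∂P, ω ∈ {ω' | (F (MSp.mbot Ω)).1 ω' ≤ s.1 ω'} → (Gr s).1 ω = g.1 ω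

/-- `Fm` is a left-continuous version of `F`: `Fm(m) = -∞` a.e. on `{m = -∞}` and, on
`{m > -∞}`, `Fm(m)` agrees a.e. with an essential supremum of
`{ F(n) : n < m a.e. on {m > -∞} }`. -/
def IsLeftContVersion (P : Measure Ω) (F Fm : MSp Ω → MSp Ω) : Prop :=
  ∀ m : MSp Ω,
    (∀ᵐ ω ∂P, m.1 ω = ⊥ → (Fm m).1 ω = ⊥) ∧
    ∃ g : MSp Ω,
      IsEssSupM P
        (F '' {n : MSp Ω | ∀ᵐ ω ∂P, ω ∈ {ω' | ⊥ < m.1 ω'} → n.1 ω < m.1 ω}) g ∧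
      ∀ᵐ ω ∂P, ω ∈ {ω' | ⊥ < m.1 ω'} → (Fm m).1 ω = g.1 ω

/-- `Fp` is a right-continuous version of `F`: `Fp(m) = +∞` a.e. on `{m = +∞}` and, on
`{m < +∞}`, `Fp(m)` agrees a.e. with an essential infimum of
`{ F(n) : n > m a.e. on {m < +∞} }`. -/
def IsRightContVersion (P : Measure Ω) (F Fp : MSp Ω → MSp Ω) : Prop :=
  ∀ m : MSp Ω,
    (∀ᵐ ω ∂P, m.1 ω = ⊤ → (Fp m).1 ω = ⊤) ∧
    ∃ g : MSp Ω,
      IsEssInfM P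
        (F '' {n : MSp Ω | ∀ᵐ ω ∂P, ω ∈ {ω' | m.1 ω' < ⊤} → m.1 ω < n.1 ω}) g ∧
      ∀ᵐ ω ∂P, ω ∈ {ω' | m.1 ω' < ⊤} → (Fp m).1 ω = g.1 ω

/-!
Everything rests on one consequence of locality and monotonicity: `F m ≤ F n` a.e. on `{m ≤ n}`.
For (1), if `F⁻(m) ≤ s` then every `n < m` on `{m > -∞}` has `F n ≤ s` on `{F(-∞) ≤ s}`; testing
this on `n = q` on `{G_r(s) < q < m}` and `-∞` elsewhere, for rational `q`, forces `m ≤ G_r(s)`.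
Conversely, if `n < m ≤ G_r(s)` on `{m > -∞}`, then on `{F n > s}` every member of the family
defining `G_r(s)` lies below `n`, hence so does `G_r(s)`; thus `F n ≤ s` there, and `F⁻(m) ≤ s`.
Statement (2) is (1) for `m ↦ -F(-m)`, whose left-continuous version and conditional
right-inverse are `m ↦ -F⁺(-m)` and `s ↦ -G_l(-s)`.
-/

open MeasureTheory Filter

@[simp]
lemma MSp.pc_apply {A : Set Ω} (hA : MeasurableSet A) (m n : MSp Ω) (ω : Ω) :
    (MSp.pc A hA m n).1 ω = pcf A m.1 n.1 ω := rfl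

lemma ae_le_of_forall_rat {P : Measure Ω} {u v : Ω → EReal}
    (h : ∀ q : ℚ, ∀ᵐ ω ∂P, v ω < (q : ℝ) → u ω ≤ (q : ℝ)) : u ≤ᵐ[P] v := by
  filter_upwards [ae_all_iff.2 h] with ω hω
  by_contra! hvu
  obtain ⟨q, hvq, hqu⟩ := EReal.exists_rat_btwn_of_lt hvu
  exact (hω q hvq).not_gt hqu

section Local

variable {P : Measure Ω} {F : MSp Ω → MSp Ω}

lemma LocalAE.ae_apply_le_of_le (hloc : LocalAE P F) (hinc : IncreasingAE P F) (m n : MSp Ω) :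
    ∀ᵐ ω ∂P, m.1 ω ≤ n.1 ω → (F m).1 ω ≤ (F n).1 ω := by
  have hD : MeasurableSet {ω | m.1 ω ≤ n.1 ω} := measurableSet_le m.2 n.2
  have hle : (MSp.pc _ hD m n).1 ≤ᵐ[P] n.1 := ae_of_all _ fun ω => by
    by_cases h : m.1 ω ≤ n.1 ω <;> simp [pcf, h]
  filter_upwards [hinc _ _ hle, hloc _ hD m n] with ω hmono hpc hω
  simpa [hpc, pcf, hω] using hmono

lemma IsEssSupM.ae_le_on {S : Set (MSp Ω)} {g : MSp Ω} (hg : IsEssSupM P S g) {A : Set Ω}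
    (hA : MeasurableSet A) {u : MSp Ω} (hu : ∀ f ∈ S, ∀ᵐ ω ∂P, ω ∈ A → f.1 ω ≤ u.1 ω) :
    ∀ᵐ ω ∂P, ω ∈ A → g.1 ω ≤ u.1 ω := by
  have hub : ∀ f ∈ S, f.1 ≤ᵐ[P] (MSp.pc A hA u g).1 := fun f hf => by
    filter_upwards [hu f hf, hg.1 f hf] with ω hfu hfg
    by_cases hω : ω ∈ A <;> simp [pcf, hω, hfu, hfg]
  filter_upwards [hg.2 _ hub] with ω hω hωA
  simpa [pcf, hωA] using hω

lemma LocalAE.ae_apply_le_of_lt_essSup (hloc : LocalAE P F) (hinc : IncreasingAE P F)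
    {B : Set Ω} (hB : MeasurableSet B) (s : MSp Ω) {g : MSp Ω}
    (hg : IsEssSupM P {c | ∀ᵐ ω ∂P, ω ∈ B → (F c).1 ω ≤ s.1 ω} g) (n : MSp Ω) :
    ∀ᵐ ω ∂P, ω ∈ B → n.1 ω < g.1 ω → (F n).1 ω ≤ s.1 ω := by
  have hC : MeasurableSet (B ∩ {ω | s.1 ω < (F n).1 ω}) := hB.inter (measurableSet_lt s.2 (F n).2)
  have hgn : ∀ᵐ ω ∂P, ω ∈ B ∩ {ω | s.1 ω < (F n).1 ω} → g.1 ω ≤ n.1 ω := by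
    refine hg.ae_le_on hC fun c hc => ?_
    filter_upwards [hc, hloc.ae_apply_le_of_le hinc n c] with ω hcs hmono ⟨hωB, hsn⟩
    by_contra! hnc
    exact (hmono hnc.le |>.trans (hcs hωB)).not_gt hsn
  filter_upwards [hgn] with ω hω hωB hng
  by_contra! hsn
  exact (hω ⟨hωB, hsn⟩).not_gt hng

variable {Fm Gr : MSp Ω → MSp Ω}

lemma le_condRightInv_of_leftContVersion_le (hloc : LocalAE P F) (hinc : IncreasingAE P F)
    (hFm : IsLeftContVersion P F Fm) (hGr : IsCondRightInv P F Gr) {m s : MSp Ω}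
    (h : (Fm m).1 ≤ᵐ[P] s.1) : m.1 ≤ᵐ[P] (Gr s).1 := by
  obtain ⟨-, g', hg', hFm_eq⟩ := hFm m
  obtain ⟨hGr_bot, g, hg, hGr_eq⟩ := hGr s
  have hbelow : ∀ n : MSp Ω, (∀ ω, ⊥ < m.1 ω → n.1 ω < m.1 ω) →
      ∀ᵐ ω ∂P, ⊥ < m.1 ω → (F n).1 ω ≤ s.1 ω := fun n hn => by
    filter_upwards [hg'.1 _ ⟨n, ae_of_all _ hn, rfl⟩, hFm_eq, h] with ω hFn hg'ω hs hω
    exact hFn.trans ((hg'ω hω).symm.le.trans hs)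
  have hAB : ∀ᵐ ω ∂P, ⊥ < m.1 ω → (F (MSp.mbot Ω)).1 ω ≤ s.1 ω := hbelow _ fun _ hω => hω
  have hmg : m.1 ≤ᵐ[P] g.1 := ae_le_of_forall_rat fun q => by
    have hD : MeasurableSet {ω | g.1 ω < (q : ℝ) ∧ ((q : ℝ) : EReal) < m.1 ω} :=
      (measurableSet_lt g.2 measurable_const).inter (measurableSet_lt measurable_const m.2)
    obtain ⟨n, hn⟩ : ∃ n : MSp Ω, ∀ ω,
        n.1 ω = if g.1 ω < (q : ℝ) ∧ ((q : ℝ) : EReal) < m.1 ω then ((q : ℝ) : EReal) else ⊥ :=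
      ⟨⟨_, Measurable.ite hD measurable_const measurable_const⟩, fun _ => rfl⟩
    have hn_lt : ∀ ω, ⊥ < m.1 ω → n.1 ω < m.1 ω := fun ω hω => by
      rw [hn]
      split_ifs with hωD
      exacts [hωD.2, hω]
    have hn_bot : ∀ ω, ¬ ⊥ < m.1 ω → n.1 ω ≤ (MSp.mbot Ω).1 ω := fun ω hω => by
      rw [hn, if_neg fun hωD => hω (bot_le.trans_lt hωD.2)]
      rfl
    have hnS : ∀ᵐ ω ∂P, (F (MSp.mbot Ω)).1 ω ≤ s.1 ω → (F n).1 ω ≤ s.1 ω := by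
      filter_upwards [hbelow n hn_lt, hloc.ae_apply_le_of_le hinc n (MSp.mbot Ω)]
        with ω hA hAc hB
      by_cases hω : ⊥ < m.1 ω
      · exact hA hω
      · exact (hAc (hn_bot ω hω)).trans hB
    filter_upwards [hg.1 n hnS] with ω hng hgq
    by_contra! hqm
    rw [hn, if_pos ⟨hgq, hqm⟩] at hng
    exact hng.not_gt hgq
  filter_upwards [hmg, hGr_bot, hGr_eq, hAB] with ω hmgω hbot heq hABω
  by_cases hB : (F (MSp.mbot Ω)).1 ω ≤ s.1 ω
  · exact hmgω.trans (heq hB).symm.le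
  · rw [not_lt.1 (mt hABω hB) |> le_bot_iff.1]
    exact bot_le

lemma leftContVersion_le_of_le_condRightInv (hloc : LocalAE P F) (hinc : IncreasingAE P F)
    (hFm : IsLeftContVersion P F Fm) (hGr : IsCondRightInv P F Gr) {m s : MSp Ω}
    (h : m.1 ≤ᵐ[P] (Gr s).1) : (Fm m).1 ≤ᵐ[P] s.1 := by
  obtain ⟨hFm_bot, g', hg', hFm_eq⟩ := hFm m
  obtain ⟨hGr_bot, g, hg, hGr_eq⟩ := hGr s
  have hA : MeasurableSet {ω | ⊥ < m.1 ω} := measurableSet_lt measurable_const m.2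
  have hB : MeasurableSet {ω | (F (MSp.mbot Ω)).1 ω ≤ s.1 ω} := measurableSet_le (F _).2 s.2
  have hg's : ∀ᵐ ω ∂P, ω ∈ {ω | ⊥ < m.1 ω} → g'.1 ω ≤ s.1 ω := by
    refine hg'.ae_le_on hA ?_
    rintro _ ⟨n, hn, rfl⟩
    filter_upwards [hn, h, hGr_bot, hGr_eq, hloc.ae_apply_le_of_lt_essSup hinc hB s hg n]
      with ω hnm hmG hbot heq hFn hω
    have hωB : (F (MSp.mbot Ω)).1 ω ≤ s.1 ω := by
      by_contra hωB
      exact (hω.trans_le (hmG.trans (hbot hωB).le)).false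
    exact hFn hωB ((hnm hω).trans_le (hmG.trans (heq hωB).le))
  filter_upwards [hg's, hFm_eq, hFm_bot] with ω hg'ω heq hbot
  by_cases hω : ⊥ < m.1 ω
  · exact (heq hω).trans_le (hg'ω hω)
  · rw [hbot (le_bot_iff.1 (not_lt.1 hω))]
    exact bot_le

lemma leftContVersion_le_iff_le_condRightInv (hloc : LocalAE P F) (hinc : IncreasingAE P F)
    (hFm : IsLeftContVersion P F Fm) (hGr : IsCondRightInv P F Gr) {m s : MSp Ω} :
    (Fm m).1 ≤ᵐ[P] s.1 ↔ m.1 ≤ᵐ[P] (Gr s).1 :=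
  ⟨le_condRightInv_of_leftContVersion_le hloc hinc hFm hGr,
    leftContVersion_le_of_le_condRightInv hloc hinc hFm hGr⟩

end Local

namespace MSp

noncomputable instance : InvolutiveNeg (MSp Ω) where
  neg m := ⟨fun ω => -m.1 ω, m.2.neg⟩
  neg_neg m := Subtype.ext (funext fun ω => neg_neg (m.1 ω))

@[simp]
lemma neg_apply (m : MSp Ω) (ω : Ω) : (-m).1 ω = -m.1 ω := rfl

@[simp]
lemma neg_mbot : -MSp.mbot Ω = MSp.mtop Ω := Subtype.ext (funext fun _ => EReal.neg_bot)

@[simp]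
lemma neg_pc {A : Set Ω} (hA : MeasurableSet A) (m n : MSp Ω) :
    -MSp.pc A hA m n = MSp.pc A hA (-m) (-n) :=
  Subtype.ext (funext fun ω => by by_cases hω : ω ∈ A <;> simp [pcf, hω])

lemma neg_ae_le_neg {P : Measure Ω} {m n : MSp Ω} : (-m).1 ≤ᵐ[P] (-n).1 ↔ n.1 ≤ᵐ[P] m.1 :=
  eventually_congr (ae_of_all _ fun _ => EReal.neg_le_neg_iff)

noncomputable def negConj (F : MSp Ω → MSp Ω) : MSp Ω → MSp Ω := fun m => -F (-m)

end MSp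

section Duality

variable {P : Measure Ω} {F : MSp Ω → MSp Ω}

lemma LocalAE.negConj (h : LocalAE P F) : LocalAE P (MSp.negConj F) := fun A hA m n => by
  filter_upwards [h A hA (-m) (-n)] with ω hω
  by_cases hωA : ω ∈ A <;> simp_all [MSp.negConj, pcf]

lemma IncreasingAE.negConj (h : IncreasingAE P F) : IncreasingAE P (MSp.negConj F) :=
  fun _ _ hmn => MSp.neg_ae_le_neg.2 (h _ _ (MSp.neg_ae_le_neg.2 hmn))

lemma IsEssInfM.neg {S : Set (MSp Ω)} {g : MSp Ω} (h : IsEssInfM P S g) :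
    IsEssSupM P (-S) (-g) := by
  refine ⟨fun f hf => ?_, fun u hu => ?_⟩
  · simpa using MSp.neg_ae_le_neg.2 (h.1 _ hf)
  · have := h.2 (-u) fun f hf => MSp.neg_ae_le_neg.1 (by simpa using hu (-f) (by simpa using hf))
    simpa using MSp.neg_ae_le_neg.2 this

lemma IsRightContVersion.negConj {Fp : MSp Ω → MSp Ω} (h : IsRightContVersion P F Fp) :
    IsLeftContVersion P (MSp.negConj F) (MSp.negConj Fp) := fun m => by
  obtain ⟨htop, g, hg, heq⟩ := h (-m)
  refine ⟨?_, -g, ?_, ?_⟩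
  · filter_upwards [htop] with ω hω hm
    simp_all [MSp.negConj]
  · convert hg.neg using 1
    rw [← Set.image_neg_eq_neg, Set.image_image,
      show MSp.negConj F = (fun x => -F x) ∘ Neg.neg from rfl, Set.image_comp, Set.image_neg_eq_neg]
    congr 1
    ext n
    simp [EReal.neg_lt_comm, lt_top_iff_ne_top, bot_lt_iff_ne_bot, EReal.neg_eq_top_iff]
  · filter_upwards [heq] with ω hω hm
    simp_all [MSp.negConj, lt_top_iff_ne_top, bot_lt_iff_ne_bot, EReal.neg_eq_top_iff]

lemma IsCondLeftInv.negConj {Gl : MSp Ω → MSp Ω} (h : IsCondLeftInv P F Gl) :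
    IsCondRightInv P (MSp.negConj F) (MSp.negConj Gl) := fun s => by
  obtain ⟨htop, g, hg, heq⟩ := h (-s)
  refine ⟨?_, -g, ?_, ?_⟩
  · filter_upwards [htop] with ω hω hm
    simp_all [MSp.negConj, EReal.neg_le]
  · convert hg.neg using 1
    ext c
    simp [MSp.negConj, EReal.neg_le]
  · filter_upwards [heq] with ω hω hm
    simp_all [MSp.negConj, EReal.neg_le]

end Duality

theorem condInverse_galois_general (P : Measure Ω)
    (F Fm Fp Gl Gr : MSp Ω → MSp Ω)
    (hFloc : LocalAE P F) (hFinc : IncreasingAE P F)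
    (hFm : IsLeftContVersion P F Fm) (hFp : IsRightContVersion P F Fp)
    (hGl : IsCondLeftInv P F Gl) (hGr : IsCondRightInv P F Gr) :
    ∀ m s : MSp Ω,
      ((Fm m).1 ≤ᵐ[P] s.1 ↔ m.1 ≤ᵐ[P] (Gr s).1) ∧
      (s.1 ≤ᵐ[P] (Fp m).1 ↔ (Gl s).1 ≤ᵐ[P] m.1) := by
  intro m s
  have hdual := leftContVersion_le_iff_le_condRightInv hFloc.negConj hFinc.negConj
    hFp.negConj hGl.negConj (m := -m) (s := -s)
  simp only [MSp.negConj, neg_neg, MSp.neg_ae_le_neg] at hdual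
  exact ⟨leftContVersion_le_iff_le_condRightInv hFloc hFinc hFm hGr, hdual⟩

/-- Galois-type duality for conditional inverses: if `F : M → M` is local, increasing and
respects a.e. equality, `F⁻`, `F⁺` are its left- and right-continuous versions and `Gl`,
`Gr` are a conditional left- and right-inverse of `F`, then for all `m, s ∈ M`:
`F⁻(m) ≤ s` a.e. iff `m ≤ Gr(s)` a.e., and `F⁺(m) ≥ s` a.e. iff `m ≥ Gl(s)` a.e. -/
theorem condInverse_galois (P : Measure Ω) [IsProbabilityMeasure P]
    (F Fm Fp Gl Gr : MSp Ω → MSp Ω)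
    (hFloc : LocalAE P F) (hFinc : IncreasingAE P F) (hFae : RespectsAE P F)
    (hFm : IsLeftContVersion P F Fm) (hFp : IsRightContVersion P F Fp)
    (hGl : IsCondLeftInv P F Gl) (hGr : IsCondRightInv P F Gr) :
    ∀ m s : MSp Ω,
      ((Fm m).1 ≤ᵐ[P] s.1 ↔ m.1 ≤ᵐ[P] (Gr s).1) ∧
      (s.1 ≤ᵐ[P] (Fp m).1 ↔ (Gl s).1 ≤ᵐ[P] m.1) :=
  condInverse_galois_general P F Fm Fp Gl Gr hFloc hFinc hFm hFp hGl hGr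
end

section
/- Let F : M → M be local, increasing, and respect a.e. equality. Then every conditional left-inverse G_l of F and every conditional right-inverse G_r of F is a conditional inverse of F, i.e. each is local, increasing, satisfies F⁻(G(s)) ≤ s ≤ F⁺(G(s)) a.e. on {F(−∞) < s < F(+∞)}, G(s) = −∞ a.e. on {s < F(−∞)}, and G(s) = +∞ a.e. on {F(+∞) < s}, for every s ∈ M. -/
open MeasureTheory

variable {Ω : Type*} [MeasurableSpace Ω]

/-- `G` is a conditional inverse of `F`: it is local, increasing, respects a.e. equality,
and for every left-continuous version `F⁻` and right-continuous version `F⁺` of `F` and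
every `s ∈ M`: `F⁻(G(s)) ≤ s ≤ F⁺(G(s))` a.e. on `{F(-∞) < s < F(+∞)}`, `G(s) = -∞` a.e.
on `{s < F(-∞)}`, and `G(s) = +∞` a.e. on `{F(+∞) < s}`. -/
def IsCondInverse (P : Measure Ω) (F G : MSp Ω → MSp Ω) : Prop :=
  LocalAE P G ∧ IncreasingAE P G ∧ RespectsAE P G ∧
  ∀ (Fm Fp : MSp Ω → MSp Ω), IsLeftContVersion P F Fm → IsRightContVersion P F Fp →
    ∀ s : MSp Ω,
      (∀ᵐ ω ∂P, (F (MSp.mbot Ω)).1 ω < s.1 ω → s.1 ω < (F (MSp.mtop Ω)).1 ω →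
        (Fm (G s)).1 ω ≤ s.1 ω ∧ s.1 ω ≤ (Fp (G s)).1 ω) ∧
      (∀ᵐ ω ∂P, s.1 ω < (F (MSp.mbot Ω)).1 ω → (G s).1 ω = ⊥) ∧
      (∀ᵐ ω ∂P, (F (MSp.mtop Ω)).1 ω < s.1 ω → (G s).1 ω = ⊤)


/-!
Call `G : M → M` locally increasing if `s ≤ t` a.e. on a measurable set `B` forces
`G s ≤ G t` a.e. on `B`. This one property yields locality, monotonicity and invariance under
a.e. equality; a local increasing `F` has it, and so does each conditional inverse, because
pasting an element of the set defining `G t` with `±∞` off `B` puts it into the set defining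
`G s`. The inequalities `F⁻(G s) ≤ s ≤ F⁺(G s)` follow from the bracketing
`n < G s → F n ≤ s` and `G s < n → s ≤ F n`. For the left inverse the first is again a pasting
argument, and the second holds because for a locally increasing `F`, `F n < F m` forces
`n < m` a.e.; the right inverse is dual. The boundary values are the bracketing at `n = ±∞`.
-/

namespace MSp

variable {A : Set Ω} {hA : MeasurableSet A} {m n : MSp Ω} {ω : Ω}

theorem pc_apply_of_mem (h : ω ∈ A) : (pc A hA m n).1 ω = m.1 ω := if_pos h

theorem pc_apply_of_notMem (h : ω ∉ A) : (pc A hA m n).1 ω = n.1 ω := if_neg h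

end MSp

section EssBounds

variable {P : Measure Ω} {S : Set (MSp Ω)} {g x : MSp Ω} {B : Set Ω}

theorem IsEssInfM.le_on (hg : IsEssInfM P S g) (hB : MeasurableSet B)
    (h : ∀ f ∈ S, ∀ᵐ ω ∂P, ω ∈ B → x.1 ω ≤ f.1 ω) :
    ∀ᵐ ω ∂P, ω ∈ B → x.1 ω ≤ g.1 ω := by
  have hlow : ∀ f ∈ S, (MSp.pc B hB x (MSp.mbot Ω)).1 ≤ᵐ[P] f.1 := fun f hf => by
    filter_upwards [h f hf] with ω hω
    by_cases hωB : ω ∈ B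
    · rw [MSp.pc_apply_of_mem hωB]; exact hω hωB
    · rw [MSp.pc_apply_of_notMem hωB]; exact bot_le
  filter_upwards [hg.2 _ hlow] with ω hω hωB
  rwa [MSp.pc_apply_of_mem hωB] at hω

theorem IsEssSupM.le_on (hg : IsEssSupM P S g) (hB : MeasurableSet B)
    (h : ∀ f ∈ S, ∀ᵐ ω ∂P, ω ∈ B → f.1 ω ≤ x.1 ω) :
    ∀ᵐ ω ∂P, ω ∈ B → g.1 ω ≤ x.1 ω := by
  have hup : ∀ f ∈ S, f.1 ≤ᵐ[P] (MSp.pc B hB x (MSp.mtop Ω)).1 := fun f hf => by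
    filter_upwards [h f hf] with ω hω
    by_cases hωB : ω ∈ B
    · rw [MSp.pc_apply_of_mem hωB]; exact hω hωB
    · rw [MSp.pc_apply_of_notMem hωB]; exact le_top
  filter_upwards [hg.2 _ hup] with ω hω hωB
  rwa [MSp.pc_apply_of_mem hωB] at hω

end EssBounds

def LocallyIncreasingAE (P : Measure Ω) (G : MSp Ω → MSp Ω) : Prop :=
  ∀ B : Set Ω, MeasurableSet B → ∀ s t : MSp Ω,
    (∀ᵐ ω ∂P, ω ∈ B → s.1 ω ≤ t.1 ω) → ∀ᵐ ω ∂P, ω ∈ B → (G s).1 ω ≤ (G t).1 ω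

namespace LocallyIncreasingAE

variable {P : Measure Ω} {G : MSp Ω → MSp Ω}

theorem of_localAE (hloc : LocalAE P G) (hinc : IncreasingAE P G) : LocallyIncreasingAE P G := by
  intro B hB s t hst
  have hpc : (MSp.pc B hB s t).1 ≤ᵐ[P] t.1 := by
    filter_upwards [hst] with ω hst
    by_cases hω : ω ∈ B
    · rw [MSp.pc_apply_of_mem hω]; exact hst hω
    · rw [MSp.pc_apply_of_notMem hω]
  filter_upwards [hinc _ _ hpc, hloc B hB s t] with ω hle hloc hω
  rwa [hloc, pcf, if_pos hω] at hle

theorem ae_eq_on (hG : LocallyIncreasingAE P G) {B : Set Ω} (hB : MeasurableSet B)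
    {s t : MSp Ω} (hst : ∀ᵐ ω ∂P, ω ∈ B → s.1 ω = t.1 ω) :
    ∀ᵐ ω ∂P, ω ∈ B → (G s).1 ω = (G t).1 ω := by
  filter_upwards [hG B hB s t (hst.mono fun _ h hω => (h hω).le),
    hG B hB t s (hst.mono fun _ h hω => (h hω).ge)] with ω h₁ h₂ hω
  exact le_antisymm (h₁ hω) (h₂ hω)

theorem increasingAE (hG : LocallyIncreasingAE P G) : IncreasingAE P G := fun s t hst =>
  (hG Set.univ MeasurableSet.univ s t (hst.mono fun _ h _ => h)).mono fun _ h => h trivial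

theorem respectsAE (hG : LocallyIncreasingAE P G) : RespectsAE P G := fun s t hst => by
  filter_upwards [hG.increasingAE s t hst.le, hG.increasingAE t s hst.symm.le] with ω h₁ h₂
  exact le_antisymm h₁ h₂

theorem localAE (hG : LocallyIncreasingAE P G) : LocalAE P G := by
  intro A hA s t
  filter_upwards [hG.ae_eq_on hA (s := MSp.pc A hA s t) (t := s)
      (ae_of_all _ fun _ hω => MSp.pc_apply_of_mem hω),
    hG.ae_eq_on hA.compl (s := MSp.pc A hA s t) (t := t)
      (ae_of_all _ fun _ hω => MSp.pc_apply_of_notMem hω)] with ω h₁ h₂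
  by_cases hω : ω ∈ A
  · rw [pcf, if_pos hω]; exact h₁ hω
  · rw [pcf, if_neg hω]; exact h₂ hω

theorem ae_lt_of_apply_lt (hG : LocallyIncreasingAE P G) (m n : MSp Ω) :
    ∀ᵐ ω ∂P, (G m).1 ω < (G n).1 ω → m.1 ω < n.1 ω := by
  filter_upwards [hG {ω | n.1 ω ≤ m.1 ω} (measurableSet_le n.2 m.2) n m (ae_of_all _ fun _ h => h)]
    with ω h hlt
  by_contra hnm
  exact (h (not_lt.1 hnm)).not_gt hlt

end LocallyIncreasingAE

section ContVersions

variable {P : Measure Ω} {F : MSp Ω → MSp Ω} {C : Set Ω} {x s : MSp Ω}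

theorem IsLeftContVersion.le_on {Fm : MSp Ω → MSp Ω} (hFm : IsLeftContVersion P F Fm)
    (hC : MeasurableSet C) (h : ∀ n, ∀ᵐ ω ∂P, ω ∈ C → n.1 ω < x.1 ω → (F n).1 ω ≤ s.1 ω) :
    ∀ᵐ ω ∂P, ω ∈ C → (Fm x).1 ω ≤ s.1 ω := by
  obtain ⟨hbot, g, hg, hFm_eq⟩ := hFm x
  have hg_le := hg.le_on (x := s) (hC.inter (measurableSet_lt measurable_const x.2)) <| by
    rintro _ ⟨n, hn, rfl⟩
    filter_upwards [hn, h n] with ω hn h hω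
    exact h hω.1 (hn hω.2)
  filter_upwards [hg_le, hbot, hFm_eq] with ω hg_le hbot hFm_eq hωC
  rcases eq_bot_or_bot_lt (x.1 ω) with hx | hx
  · rw [hbot hx]; exact bot_le
  · rw [hFm_eq hx]; exact hg_le ⟨hωC, hx⟩

theorem IsRightContVersion.le_on {Fp : MSp Ω → MSp Ω} (hFp : IsRightContVersion P F Fp)
    (hC : MeasurableSet C) (h : ∀ n, ∀ᵐ ω ∂P, ω ∈ C → x.1 ω < n.1 ω → s.1 ω ≤ (F n).1 ω) :
    ∀ᵐ ω ∂P, ω ∈ C → s.1 ω ≤ (Fp x).1 ω := by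
  obtain ⟨htop, g, hg, hFp_eq⟩ := hFp x
  have hg_ge := hg.le_on (x := s) (hC.inter (measurableSet_lt x.2 measurable_const)) <| by
    rintro _ ⟨n, hn, rfl⟩
    filter_upwards [hn, h n] with ω hn h hω
    exact h hω.1 (hn hω.2)
  filter_upwards [hg_ge, htop, hFp_eq] with ω hg_ge htop hFp_eq hωC
  rcases eq_top_or_lt_top (x.1 ω) with hx | hx
  · rw [htop hx]; exact le_top
  · rw [hFp_eq hx]; exact hg_ge ⟨hωC, hx⟩

theorem isCondInverse_of_locallyIncreasingAE {G : MSp Ω → MSp Ω} (hG : LocallyIncreasingAE P G)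
    (hle : ∀ s n : MSp Ω, ∀ᵐ ω ∂P, (F (MSp.mbot Ω)).1 ω < s.1 ω →
      s.1 ω < (F (MSp.mtop Ω)).1 ω → (G s).1 ω < n.1 ω → s.1 ω ≤ (F n).1 ω)
    (hge : ∀ s n : MSp Ω, ∀ᵐ ω ∂P, (F (MSp.mbot Ω)).1 ω < s.1 ω →
      s.1 ω < (F (MSp.mtop Ω)).1 ω → n.1 ω < (G s).1 ω → (F n).1 ω ≤ s.1 ω)
    (hbot : ∀ s : MSp Ω, ∀ᵐ ω ∂P, s.1 ω < (F (MSp.mbot Ω)).1 ω → (G s).1 ω = ⊥)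
    (htop : ∀ s : MSp Ω, ∀ᵐ ω ∂P, (F (MSp.mtop Ω)).1 ω < s.1 ω → (G s).1 ω = ⊤) :
    IsCondInverse P F G := by
  refine ⟨hG.localAE, hG.increasingAE, hG.respectsAE, fun Fm Fp hFm hFp s => ⟨?_, hbot s, htop s⟩⟩
  have hC : MeasurableSet ({ω | (F (MSp.mbot Ω)).1 ω < s.1 ω} ∩
      {ω | s.1 ω < (F (MSp.mtop Ω)).1 ω}) :=
    (measurableSet_lt (F _).2 s.2).inter (measurableSet_lt s.2 (F _).2)
  filter_upwards [hFm.le_on hC fun n => (hge s n).mono fun _ h hω => h hω.1 hω.2,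
    hFp.le_on hC fun n => (hle s n).mono fun _ h hω => h hω.1 hω.2] with ω h₁ h₂ hb ht
  exact ⟨h₁ ⟨hb, ht⟩, h₂ ⟨hb, ht⟩⟩

end ContVersions

section CondLeftInv

variable {P : Measure Ω} {F Gl : MSp Ω → MSp Ω}

/-- Definitionally the set whose essential infimum appears in `IsCondLeftInv` at `s`. -/
def leftInvSet (P : Measure Ω) (F : MSp Ω → MSp Ω) (s : MSp Ω) : Set (MSp Ω) :=
  {m : MSp Ω | ∀ᵐ ω ∂P, ω ∈ {ω' | s.1 ω' ≤ (F (MSp.mtop Ω)).1 ω'} → s.1 ω ≤ (F m).1 ω}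

theorem pc_mem_leftInvSet (hF : LocallyIncreasingAE P F) {s m : MSp Ω} {B : Set Ω}
    (hB : MeasurableSet B)
    (h : ∀ᵐ ω ∂P, ω ∈ B → s.1 ω ≤ (F (MSp.mtop Ω)).1 ω → s.1 ω ≤ (F m).1 ω) :
    MSp.pc B hB m (MSp.mtop Ω) ∈ leftInvSet P F s := by
  filter_upwards [h, hF B hB _ _ (ae_of_all _ fun _ hω => (MSp.pc_apply_of_mem hω).ge),
    hF Bᶜ hB.compl _ _ (ae_of_all _ fun _ hω => (MSp.pc_apply_of_notMem hω).ge)]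
    with ω h hon hoff (hs : s.1 ω ≤ _)
  by_cases hω : ω ∈ B
  · exact (h hω hs).trans (hon hω)
  · exact hs.trans (hoff hω)

theorem IsCondLeftInv.locallyIncreasingAE (hF : LocallyIncreasingAE P F)
    (hGl : IsCondLeftInv P F Gl) : LocallyIncreasingAE P Gl := by
  intro B hB s t hst
  obtain ⟨-, gs, hgs, hGl_s⟩ := hGl s
  obtain ⟨hGl_top, gt, hgt, hGl_t⟩ := hGl t
  have hBt : MeasurableSet (B ∩ {ω | t.1 ω ≤ (F (MSp.mtop Ω)).1 ω}) :=
    hB.inter (measurableSet_le t.2 (F _).2)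
  have hg : ∀ᵐ ω ∂P, ω ∈ B ∩ {ω | t.1 ω ≤ (F (MSp.mtop Ω)).1 ω} → gs.1 ω ≤ gt.1 ω :=
    hgt.le_on hBt fun m hm => by
      have hmem : MSp.pc _ hBt m (MSp.mtop Ω) ∈ leftInvSet P F s :=
        pc_mem_leftInvSet hF hBt <| by
          filter_upwards [hm, hst] with ω hm hst hω _
          exact (hst hω.1).trans (hm hω.2)
      filter_upwards [hgs.1 _ hmem] with ω h hω
      rwa [MSp.pc_apply_of_mem hω] at h
  filter_upwards [hst, hg, hGl_s, hGl_t, hGl_top] with ω hst hg hGl_s hGl_t hGl_top hωB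
  by_cases ht : t.1 ω ≤ (F (MSp.mtop Ω)).1 ω
  · rw [hGl_s ((hst hωB).trans ht), hGl_t ht]; exact hg ⟨hωB, ht⟩
  · rw [hGl_top ht]; exact le_top

theorem IsCondLeftInv.le_apply_of_lt (hF : LocallyIncreasingAE P F) (hGl : IsCondLeftInv P F Gl)
    (s n : MSp Ω) :
    ∀ᵐ ω ∂P, s.1 ω ≤ (F (MSp.mtop Ω)).1 ω → (Gl s).1 ω < n.1 ω → s.1 ω ≤ (F n).1 ω := by
  obtain ⟨-, g, hg, hGl_eq⟩ := hGl s
  have hB : MeasurableSet ({ω | s.1 ω ≤ (F (MSp.mtop Ω)).1 ω} ∩ {ω | (F n).1 ω < s.1 ω}) :=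
    (measurableSet_le s.2 (F _).2).inter (measurableSet_lt (F n).2 s.2)
  have hng := hg.le_on hB fun m hm => by
    filter_upwards [hm, hF.ae_lt_of_apply_lt n m] with ω hm hlt hω
    exact (hlt (hω.2.trans_le (hm hω.1))).le
  filter_upwards [hng, hGl_eq] with ω hng hGl_eq hs hlt
  by_contra hFn
  exact (hGl_eq hs ▸ hlt).not_ge (hng ⟨hs, not_le.1 hFn⟩)

theorem IsCondLeftInv.apply_le_of_lt (hF : LocallyIncreasingAE P F) (hGl : IsCondLeftInv P F Gl)
    (s n : MSp Ω) :
    ∀ᵐ ω ∂P, s.1 ω ≤ (F (MSp.mtop Ω)).1 ω → n.1 ω < (Gl s).1 ω → (F n).1 ω ≤ s.1 ω := by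
  obtain ⟨-, g, hg, hGl_eq⟩ := hGl s
  have hmem := pc_mem_leftInvSet hF (measurableSet_lt s.2 (F n).2) (m := n)
    (ae_of_all _ fun _ hω _ => le_of_lt hω)
  filter_upwards [hg.1 _ hmem, hGl_eq] with ω hgn hGl_eq hs hlt
  by_contra hFn
  have hω : ω ∈ {ω | s.1 ω < (F n).1 ω} := not_le.1 hFn
  rw [MSp.pc_apply_of_mem hω] at hgn
  exact (hGl_eq hs ▸ hlt).not_ge hgn

theorem IsCondLeftInv.isCondInverse (hF : LocallyIncreasingAE P F) (hGl : IsCondLeftInv P F Gl) :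
    IsCondInverse P F Gl := by
  refine isCondInverse_of_locallyIncreasingAE (hGl.locallyIncreasingAE hF)
    (fun s n => ?_) (fun s n => ?_) (fun s => ?_) (fun s => ?_)
  · filter_upwards [hGl.le_apply_of_lt hF s n] with ω h _ hs
    exact h hs.le
  · filter_upwards [hGl.apply_le_of_lt hF s n] with ω h _ hs
    exact h hs.le
  · filter_upwards [hGl.apply_le_of_lt hF s (MSp.mbot Ω),
      hF.increasingAE (MSp.mbot Ω) (MSp.mtop Ω) (ae_of_all _ fun _ => bot_le)] with ω h hbt hs
    by_contra hne
    exact (h (hs.le.trans hbt) (bot_lt_iff_ne_bot.2 hne)).not_gt hs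
  · filter_upwards [(hGl s).1] with ω h hs
    exact h hs.not_ge

end CondLeftInv

section CondRightInv

variable {P : Measure Ω} {F Gr : MSp Ω → MSp Ω}

/-- Definitionally the set whose essential supremum appears in `IsCondRightInv` at `s`. -/
def rightInvSet (P : Measure Ω) (F : MSp Ω → MSp Ω) (s : MSp Ω) : Set (MSp Ω) :=
  {m : MSp Ω | ∀ᵐ ω ∂P, ω ∈ {ω' | (F (MSp.mbot Ω)).1 ω' ≤ s.1 ω'} → (F m).1 ω ≤ s.1 ω}

theorem pc_mem_rightInvSet (hF : LocallyIncreasingAE P F) {s m : MSp Ω} {B : Set Ω}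
    (hB : MeasurableSet B)
    (h : ∀ᵐ ω ∂P, ω ∈ B → (F (MSp.mbot Ω)).1 ω ≤ s.1 ω → (F m).1 ω ≤ s.1 ω) :
    MSp.pc B hB m (MSp.mbot Ω) ∈ rightInvSet P F s := by
  filter_upwards [h, hF B hB _ _ (ae_of_all _ fun _ hω => (MSp.pc_apply_of_mem hω).le),
    hF Bᶜ hB.compl _ _ (ae_of_all _ fun _ hω => (MSp.pc_apply_of_notMem hω).le)]
    with ω h hon hoff (hs : _ ≤ s.1 ω)
  by_cases hω : ω ∈ B
  · exact (hon hω).trans (h hω hs)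
  · exact (hoff hω).trans hs

theorem IsCondRightInv.locallyIncreasingAE (hF : LocallyIncreasingAE P F)
    (hGr : IsCondRightInv P F Gr) : LocallyIncreasingAE P Gr := by
  intro B hB s t hst
  obtain ⟨hGr_bot, gs, hgs, hGr_s⟩ := hGr s
  obtain ⟨-, gt, hgt, hGr_t⟩ := hGr t
  have hBs : MeasurableSet (B ∩ {ω | (F (MSp.mbot Ω)).1 ω ≤ s.1 ω}) :=
    hB.inter (measurableSet_le (F _).2 s.2)
  have hg : ∀ᵐ ω ∂P, ω ∈ B ∩ {ω | (F (MSp.mbot Ω)).1 ω ≤ s.1 ω} → gs.1 ω ≤ gt.1 ω :=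
    hgs.le_on hBs fun m hm => by
      have hmem : MSp.pc _ hBs m (MSp.mbot Ω) ∈ rightInvSet P F t :=
        pc_mem_rightInvSet hF hBs <| by
          filter_upwards [hm, hst] with ω hm hst hω _
          exact (hm hω.2).trans (hst hω.1)
      filter_upwards [hgt.1 _ hmem] with ω h hω
      rwa [MSp.pc_apply_of_mem hω] at h
  filter_upwards [hst, hg, hGr_s, hGr_t, hGr_bot] with ω hst hg hGr_s hGr_t hGr_bot hωB
  by_cases hs : (F (MSp.mbot Ω)).1 ω ≤ s.1 ω
  · rw [hGr_s hs, hGr_t (hs.trans (hst hωB))]; exact hg ⟨hωB, hs⟩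
  · rw [hGr_bot hs]; exact bot_le

theorem IsCondRightInv.apply_le_of_lt (hF : LocallyIncreasingAE P F)
    (hGr : IsCondRightInv P F Gr) (s n : MSp Ω) :
    ∀ᵐ ω ∂P, (F (MSp.mbot Ω)).1 ω ≤ s.1 ω → n.1 ω < (Gr s).1 ω → (F n).1 ω ≤ s.1 ω := by
  obtain ⟨-, g, hg, hGr_eq⟩ := hGr s
  have hB : MeasurableSet ({ω | (F (MSp.mbot Ω)).1 ω ≤ s.1 ω} ∩ {ω | s.1 ω < (F n).1 ω}) :=
    (measurableSet_le (F _).2 s.2).inter (measurableSet_lt s.2 (F n).2)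
  have hgn := hg.le_on hB fun m hm => by
    filter_upwards [hm, hF.ae_lt_of_apply_lt m n] with ω hm hlt hω
    exact (hlt ((hm hω.1).trans_lt hω.2)).le
  filter_upwards [hgn, hGr_eq] with ω hgn hGr_eq hs hlt
  by_contra hFn
  exact (hGr_eq hs ▸ hlt).not_ge (hgn ⟨hs, not_le.1 hFn⟩)

theorem IsCondRightInv.le_apply_of_lt (hF : LocallyIncreasingAE P F)
    (hGr : IsCondRightInv P F Gr) (s n : MSp Ω) :
    ∀ᵐ ω ∂P, (F (MSp.mbot Ω)).1 ω ≤ s.1 ω → (Gr s).1 ω < n.1 ω → s.1 ω ≤ (F n).1 ω := by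
  obtain ⟨-, g, hg, hGr_eq⟩ := hGr s
  have hmem := pc_mem_rightInvSet hF (measurableSet_lt (F n).2 s.2) (m := n)
    (ae_of_all _ fun _ hω _ => le_of_lt hω)
  filter_upwards [hg.1 _ hmem, hGr_eq] with ω hng hGr_eq hs hlt
  by_contra hFn
  have hω : ω ∈ {ω | (F n).1 ω < s.1 ω} := not_le.1 hFn
  rw [MSp.pc_apply_of_mem hω] at hng
  exact (hGr_eq hs ▸ hlt).not_ge hng

theorem IsCondRightInv.isCondInverse (hF : LocallyIncreasingAE P F)
    (hGr : IsCondRightInv P F Gr) : IsCondInverse P F Gr := by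
  refine isCondInverse_of_locallyIncreasingAE (hGr.locallyIncreasingAE hF)
    (fun s n => ?_) (fun s n => ?_) (fun s => ?_) (fun s => ?_)
  · filter_upwards [hGr.le_apply_of_lt hF s n] with ω h hs
    exact fun _ => h hs.le
  · filter_upwards [hGr.apply_le_of_lt hF s n] with ω h hs
    exact fun _ => h hs.le
  · filter_upwards [(hGr s).1] with ω h hs
    exact h hs.not_ge
  · filter_upwards [hGr.le_apply_of_lt hF s (MSp.mtop Ω),
      hF.increasingAE (MSp.mbot Ω) (MSp.mtop Ω) (ae_of_all _ fun _ => bot_le)] with ω h hbt hs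
    by_contra hne
    exact (h (hbt.trans hs.le) (lt_top_iff_ne_top.2 hne)).not_gt hs

end CondRightInv

theorem leftRightInv_isCondInverse_general (P : Measure Ω)
    (F Gl Gr : MSp Ω → MSp Ω)
    (hFloc : LocalAE P F) (hFinc : IncreasingAE P F)
    (hGl : IsCondLeftInv P F Gl) (hGr : IsCondRightInv P F Gr) :
    IsCondInverse P F Gl ∧ IsCondInverse P F Gr :=
  have hF := LocallyIncreasingAE.of_localAE hFloc hFinc
  ⟨hGl.isCondInverse hF, hGr.isCondInverse hF⟩

/-- Every conditional left-inverse and every conditional right-inverse of a local,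
increasing map `F : M → M` respecting a.e. equality is a conditional inverse of `F`. -/
theorem leftRightInv_isCondInverse (P : Measure Ω) [IsProbabilityMeasure P]
    (F Gl Gr : MSp Ω → MSp Ω)
    (hFloc : LocalAE P F) (hFinc : IncreasingAE P F) (hFae : RespectsAE P F)
    (hGl : IsCondLeftInv P F Gl) (hGr : IsCondRightInv P F Gr) :
    IsCondInverse P F Gl ∧ IsCondInverse P F Gr :=
  leftRightInv_isCondInverse_general P F Gl Gr hFloc hFinc hGl hGr
end
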